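/- arXiv:2501.18264 — 4 statements merged into one kernel-verified Lean document; each statement's English description precedes it below -/
import Mathlib

section
/- (Lemma 1 of the paper.) Let X_i, X_j be M_t×L complex matrices, A_i, A_j be M_t×K complex matrices, and D_i, D_j be L×K complex matrices. Define V(X,A,D) = (Xᵀ·A) ⊙ D, an L×K complex matrix. Then V(X_i,A_i,D_i)ᴴ · V(X_j,A_j,D_j) = (A_i • D_i)ᴴ · (X_iᵀ ∗ I_L)ᴴ · (X_jᵀ ∗ I_L) · (A_j • D_j), where I_L is the L×L identity matrix. -/
open Matrix

/-- Face-splitting (row-wise Kronecker) product of `A : K×M` and `B : K×N`: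
the `K×(M·N)` matrix with entries `(A ∗ B)_{k,(m,n)} = A_{k,m} · B_{k,n}`. -/
def faceSplit {K M N : Type*} (A : Matrix K M ℂ) (B : Matrix K N ℂ) :
    Matrix K (M × N) ℂ :=
  Matrix.of fun k mn => A k mn.1 * B k mn.2

/-- Column-wise Khatri–Rao product of `C : M×R` and `D : N×R`:
the `(M·N)×R` matrix with entries `(C • D)_{(m,n),r} = C_{m,r} · D_{n,r}`. -/
def khatriRao {M N R : Type*} (C : Matrix M R ℂ) (D : Matrix N R ℂ) :
    Matrix (M × N) R ℂ :=
  Matrix.of fun mn r => C mn.1 r * D mn.2 r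

/-- `V(X,A,D) = (Xᵀ·A) ⊙ D`. -/
noncomputable def Vmat {Mt L K : Type*} [Fintype Mt]
    (X : Matrix Mt L ℂ) (A : Matrix Mt K ℂ) (D : Matrix L K ℂ) : Matrix L K ℂ :=
  (Xᵀ * A).hadamard D

lemma faceSplit_mul_khatriRao {Mt L K : Type*} [Fintype Mt] [Fintype L] [DecidableEq L]
    (X : Matrix Mt L ℂ) (A : Matrix Mt K ℂ) (D : Matrix L K ℂ) :
    faceSplit Xᵀ (1 : Matrix L L ℂ) * khatriRao A D = Vmat X A D := by
  ext l k
  simp only [Matrix.mul_apply, faceSplit, khatriRao, Vmat, Matrix.hadamard_apply,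
    Matrix.of_apply, Matrix.transpose_apply, Matrix.one_apply, Fintype.sum_prod_type,
    mul_ite, ite_mul, mul_one, one_mul, mul_zero, zero_mul,
    Finset.sum_ite_eq, Finset.mem_univ, if_true, Finset.sum_mul]
  exact Finset.sum_congr rfl fun m _ => by ring

/-- Lemma 1: `V_iᴴ·V_j = (A_i • D_i)ᴴ·(X_iᵀ ∗ I_L)ᴴ·(X_jᵀ ∗ I_L)·(A_j • D_j)`. -/
theorem Vmat_conjTranspose_mul_Vmat
    {Mt L K : Type*} [Fintype Mt] [Fintype L] [DecidableEq L]
    (X_i X_j : Matrix Mt L ℂ) (A_i A_j : Matrix Mt K ℂ) (D_i D_j : Matrix L K ℂ) :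
    (Vmat X_i A_i D_i)ᴴ * Vmat X_j A_j D_j =
      (khatriRao A_i D_i)ᴴ * (faceSplit X_iᵀ (1 : Matrix L L ℂ))ᴴ *
        faceSplit X_jᵀ (1 : Matrix L L ℂ) * khatriRao A_j D_j := by
  rw [← faceSplit_mul_khatriRao X_i A_i D_i, ← faceSplit_mul_khatriRao X_j A_j D_j,
    Matrix.conjTranspose_mul, Matrix.mul_assoc, Matrix.mul_assoc, Matrix.mul_assoc]
end

section
/- (Theorem 1 of the paper, concrete identity form.) Let X_i, X_j be M_t×L complex matrices with columns x_{i,l} and x_{j,l}, let A_i, A_j be M_t×K complex matrices, and D_i, D_j be L×K complex matrices. Define V(X,A,D) = (Xᵀ·A) ⊙ D. Then V(X_i,A_i,D_i)ᴴ · V(X_j,A_j,D_j) = Σ_{l=1}^{L} (A_i • D_i)ᴴ · ((conj(x_{i,l})·x_{j,l}ᵀ) ⊗ (e_l·e_lᵀ)) · (A_j • D_j). In particular, the Gram matrix V_iᴴ V_j is a linear function of the per-subcarrier cross-covariance matrices conj(x_{i,l})·x_{j,l}ᵀ, l = 1,…,L. -/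
open Matrix Kronecker

/-!
Both sides are instances of the two mixed-product rules of the Khatri–Rao product,
`(B • E)ᵀ (C • F) = (Bᵀ C) ⊙ (Eᵀ F)` and `(B • E)(C • F)ᵀ = Σ_r (b_r c_rᵀ) ⊗ (e_r f_rᵀ)`.
The first with `E = 1` gives `V(X, A, D) = (X • 1)ᵀ (A • D)`, so
`V_iᴴ V_j = (A_i • D_i)ᴴ (conj X_i • 1)(X_j • 1)ᵀ (A_j • D_j)`, and the second expands the
middle factor into the sum over subcarriers, with `e_l e_lᵀ` coming from the columns of `1`.
-/

section KhatriRao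

variable {M N P Q R S : Type*}

theorem transpose_khatriRao_mul_khatriRao [Fintype M] [Fintype N]
    (B : Matrix M R ℂ) (E : Matrix N R ℂ) (C : Matrix M S ℂ) (F : Matrix N S ℂ) :
    (khatriRao B E)ᵀ * khatriRao C F = (Bᵀ * C) ⊙ (Eᵀ * F) := by
  ext r s
  simp only [khatriRao, mul_apply, transpose_apply, of_apply, hadamard_apply,
    Fintype.sum_prod_type, Finset.sum_mul_sum]
  exact Finset.sum_congr rfl fun _ _ => Finset.sum_congr rfl fun _ _ => by ring

theorem khatriRao_mul_transpose_khatriRao [Fintype R]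
    (B : Matrix M R ℂ) (E : Matrix N R ℂ) (C : Matrix P R ℂ) (F : Matrix Q R ℂ) :
    khatriRao B E * (khatriRao C F)ᵀ =
      ∑ r, vecMulVec (fun m => B m r) (fun p => C p r) ⊗ₖ
        vecMulVec (fun n => E n r) (fun q => F q r) := by
  ext ⟨m, n⟩ ⟨p, q⟩
  simp only [khatriRao, mul_apply, transpose_apply, of_apply, Matrix.sum_apply,
    kroneckerMap_apply, vecMulVec_apply]
  exact Finset.sum_congr rfl fun _ _ => by ring

theorem map_star_khatriRao (B : Matrix M R ℂ) (E : Matrix N R ℂ) :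
    (khatriRao B E).map star = khatriRao (B.map star) (E.map star) := by
  ext
  simp [khatriRao]

end KhatriRao

theorem Vmat_eq_transpose_khatriRao_one_mul_khatriRao {Mt L K : Type*} [Fintype Mt] [Fintype L]
    [DecidableEq L] (X : Matrix Mt L ℂ) (A : Matrix Mt K ℂ) (D : Matrix L K ℂ) :
    Vmat X A D = (khatriRao X (1 : Matrix L L ℂ))ᵀ * khatriRao A D := by
  rw [transpose_khatriRao_mul_khatriRao, transpose_one, Matrix.one_mul]
  rfl

theorem vecMulVec_col_one_self {L α : Type*} [DecidableEq L] [MulZeroOneClass α] (l : L) :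
    vecMulVec (fun i => (1 : Matrix L L α) i l) (fun j => (1 : Matrix L L α) j l) =
      single l l 1 := by
  ext i j
  simp only [vecMulVec_apply, single_apply, one_apply, mul_ite, mul_one, mul_zero, ← ite_and]
  simp only [eq_comm, and_comm]

/-- Theorem 1 (concrete identity form): the Gram matrix `V_iᴴ·V_j` equals
`Σ_l (A_i • D_i)ᴴ·((conj(x_{i,l})·x_{j,l}ᵀ) ⊗ (e_l·e_lᵀ))·(A_j • D_j)`,
hence is a linear function of the per-subcarrier cross-covariance matrices
`conj(x_{i,l})·x_{j,l}ᵀ`. -/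
theorem Vmat_gram_eq_sum_per_subcarrier
    {Mt L K : Type*} [Fintype Mt] [Fintype L] [DecidableEq L]
    (X_i X_j : Matrix Mt L ℂ) (A_i A_j : Matrix Mt K ℂ) (D_i D_j : Matrix L K ℂ) :
    (Vmat X_i A_i D_i)ᴴ * Vmat X_j A_j D_j =
      ∑ l : L, (khatriRao A_i D_i)ᴴ *
        ((Matrix.vecMulVec (fun m => star (X_i m l)) fun m => X_j m l) ⊗ₖ
          Matrix.single l l (1 : ℂ)) * khatriRao A_j D_j := by
  calc (Vmat X_i A_i D_i)ᴴ * Vmat X_j A_j D_j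
      = (khatriRao A_i D_i)ᴴ *
          (khatriRao (X_i.map star) (1 : Matrix L L ℂ) * (khatriRao X_j (1 : Matrix L L ℂ))ᵀ) *
          khatriRao A_j D_j := by
        rw [Vmat_eq_transpose_khatriRao_one_mul_khatriRao,
          Vmat_eq_transpose_khatriRao_one_mul_khatriRao, conjTranspose_mul,
          transpose_conjTranspose, map_star_khatriRao,
          Matrix.map_one star (star_zero ℂ) (star_one ℂ)]
        simp only [Matrix.mul_assoc]
    _ = _ := by
        simp only [khatriRao_mul_transpose_khatriRao, map_apply, vecMulVec_col_one_self,
          Matrix.mul_sum, Matrix.sum_mul]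
end

section
/- (Invariance consequence of Theorem 1.) Let X_i, X_j, X'_i, X'_j be M_t×L complex matrices with columns x_{i,l}, x_{j,l}, x'_{i,l}, x'_{j,l}, and suppose conj(x_{i,l})·x_{j,l}ᵀ = conj(x'_{i,l})·x'_{j,l}ᵀ for every l = 1,…,L. Then for all M_t×K complex matrices A_i, A_j and all L×K complex matrices D_i, D_j, defining V(X,A,D) = (Xᵀ·A) ⊙ D, one has V(X_i,A_i,D_i)ᴴ · V(X_j,A_j,D_j) = V(X'_i,A_i,D_i)ᴴ · V(X'_j,A_j,D_j). -/
open Matrix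

/-- Invariance consequence of Theorem 1: if the per-subcarrier cross-covariance
matrices `conj(x_{i,l})·x_{j,l}ᵀ` coincide for two pairs of transmit signals, the
Gram matrices `VᴴV` coincide for all steering matrices `A` and delay matrices `D`. -/
theorem Vmat_gram_invariance
    {Mt L : Type*} [Fintype Mt] [Fintype L]
    (X_i X_j X'_i X'_j : Matrix Mt L ℂ)
    (hcov : ∀ l : L,
      (Matrix.vecMulVec (fun m => star (X_i m l)) fun m => X_j m l) =
        Matrix.vecMulVec (fun m => star (X'_i m l)) fun m => X'_j m l) :
    ∀ {K : Type*} (A_i A_j : Matrix Mt K ℂ) (D_i D_j : Matrix L K ℂ),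
      (Vmat X_i A_i D_i)ᴴ * Vmat X_j A_j D_j =
        (Vmat X'_i A_i D_i)ᴴ * Vmat X'_j A_j D_j := by
  intro K A_i A_j D_i D_j
  ext k k'
  simp only [Vmat, mul_apply, conjTranspose_apply, hadamard_apply, transpose_apply,
    star_mul', Finset.mul_sum, Finset.sum_mul]
  apply Finset.sum_congr rfl
  intro l _
  have key : ∀ m m', star (X_i m l) * X_j m' l = star (X'_i m l) * X'_j m' l := by
    intro m m'
    have := congrFun (congrFun (hcov l) m) m'
    simpa [vecMulVec_apply] using this
  simp only [star_sum, star_mul', Finset.sum_mul, Finset.mul_sum]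
  apply Finset.sum_congr rfl
  intro m' _
  apply Finset.sum_congr rfl
  intro m _
  linear_combination (star (A_i m k) * star (D_i l k) * A_j m' k' * D_j l k') * key m m'
end

section
/- (Key extraction lemma for Theorem 2 of the paper, eq. (40).) Let R be an n×n complex positive semidefinite matrix and h ∈ ℂ^n a vector with hᴴ·R·h ≠ 0 (note hᴴ·R·h is a nonnegative real number). Define the vector w = (hᴴ·R·h)^{−1/2} · R·h. Then |hᴴ·w|² = hᴴ·R·h, and the matrix R − w·wᴴ is positive semidefinite. -/
/-! With `q = hᴴRh ≥ 0` and `w = q^{-1/2} • Rh` one has `hᴴw = √q` and `wwᴴ = q⁻¹ (Rh)(Rh)ᴴ`.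
Cauchy–Schwarz for the semi-inner product `⟪x, y⟫ = xᴴRy` gives `|zᴴRh|² ≤ (zᴴRz)(hᴴRh)`,
which says exactly that `zᴴ(R - q⁻¹ (Rh)(Rh)ᴴ)z ≥ 0`. -/

open Matrix ComplexOrder

namespace Matrix

variable {𝕜 n : Type*} [RCLike 𝕜] [Fintype n]

theorem PosSemidef.norm_dotProduct_mulVec_sq_le {R : Matrix n n 𝕜} (hR : R.PosSemidef)
    (x y : n → 𝕜) :
    ‖star x ⬝ᵥ R *ᵥ y‖ ^ 2 ≤ RCLike.re (star x ⬝ᵥ R *ᵥ x) * RCLike.re (star y ⬝ᵥ R *ᵥ y) := by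
  let _ := R.toSeminormedAddCommGroup hR
  let _ := R.toInnerProductSpace hR
  have hinner (a b : n → 𝕜) : inner 𝕜 a b = star a ⬝ᵥ R *ᵥ b := dotProduct_comm _ _
  have hsym : ‖star y ⬝ᵥ R *ᵥ x‖ = ‖star x ⬝ᵥ R *ᵥ y‖ := by
    rw [← hinner, ← hinner, ← inner_conj_symm, RCLike.norm_conj]
  simpa only [hinner, hsym, sq] using inner_mul_inner_self_le (𝕜 := 𝕜) x y

theorem dotProduct_vecMulVec_self_star_mulVec (v z : n → 𝕜) :
    star z ⬝ᵥ vecMulVec v (star v) *ᵥ z = (‖star z ⬝ᵥ v‖ ^ 2 : ℝ) := by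
  rw [vecMulVec_mulVec, op_smul_eq_smul, dotProduct_smul, smul_eq_mul, RCLike.ofReal_pow,
    ← RCLike.conj_mul, star_dotProduct, RCLike.star_def]

theorem PosSemidef.sub_smul_vecMulVec_mulVec {R : Matrix n n 𝕜} (hR : R.PosSemidef)
    (h : n → 𝕜) :
    (R - (RCLike.re (star h ⬝ᵥ R *ᵥ h))⁻¹ • vecMulVec (R *ᵥ h) (star (R *ᵥ h))).PosSemidef := by
  set r := RCLike.re (star h ⬝ᵥ R *ᵥ h)
  have hr : 0 ≤ r := RCLike.nonneg_iff.mp (hR.dotProduct_mulVec_nonneg h) |>.1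
  refine .of_dotProduct_mulVec_nonneg
    (hR.isHermitian.sub ((posSemidef_vecMulVec_self_star _).smul (inv_nonneg.mpr hr)).isHermitian)
    fun z => ?_
  obtain ⟨hz_re, hz_im⟩ := RCLike.nonneg_iff.mp (hR.dotProduct_mulVec_nonneg z)
  have hcs : r⁻¹ * ‖star z ⬝ᵥ R *ᵥ h‖ ^ 2 ≤ RCLike.re (star z ⬝ᵥ R *ᵥ z) := by
    rw [inv_mul_eq_div]
    exact div_le_of_le_mul₀ hr hz_re (hR.norm_dotProduct_mulVec_sq_le z h)
  rw [sub_mulVec, dotProduct_sub, smul_mulVec, dotProduct_smul,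
    dotProduct_vecMulVec_self_star_mulVec, sub_nonneg, RCLike.real_smul_eq_coe_mul,
    ← RCLike.ofReal_mul, RCLike.le_iff_re_im]
  exact ⟨by rwa [RCLike.ofReal_re], by simp [hz_im]⟩

end Matrix

theorem Complex.ofReal_cpow_neg_one_half {r : ℝ} (hr : 0 ≤ r) :
    (r : ℂ) ^ (-(1 / 2) : ℂ) = ((√r)⁻¹ : ℝ) := by
  rw [Real.sqrt_eq_rpow, ← Real.rpow_neg hr, Complex.ofReal_cpow hr]
  push_cast
  rfl

theorem beamformer_extraction_general
    {n : ℕ} (R : Matrix (Fin n) (Fin n) ℂ) (hR : R.PosSemidef)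
    (h : Fin n → ℂ)
    (w : Fin n → ℂ)
    (hw : w = fun i => (star h ⬝ᵥ R.mulVec h) ^ (-(1 / 2) : ℂ) * R.mulVec h i) :
    ((‖star h ⬝ᵥ w‖ : ℂ)) ^ 2 = star h ⬝ᵥ R.mulVec h ∧
      (R - Matrix.vecMulVec w (star w)).PosSemidef := by
  have hq_nonneg := hR.dotProduct_mulVec_nonneg h
  set r := (star h ⬝ᵥ R *ᵥ h).re
  have hr : 0 ≤ r := (Complex.nonneg_iff.mp hq_nonneg).1
  have hq : star h ⬝ᵥ R *ᵥ h = r := Complex.eq_re_of_ofReal_le hq_nonneg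
  have hw_smul : w = ((√r)⁻¹ : ℝ) • R *ᵥ h := by
    rw [hw, hq, Complex.ofReal_cpow_neg_one_half hr]
    rfl
  constructor
  · rw [hw_smul, dotProduct_smul, hq, Complex.real_smul, ← Complex.ofReal_mul, Complex.norm_real,
      ← div_eq_inv_mul, Real.div_sqrt, Real.norm_of_nonneg (Real.sqrt_nonneg r),
      ← Complex.ofReal_pow, Real.sq_sqrt hr]
  · have hrank : vecMulVec w (star w) = r⁻¹ • vecMulVec (R *ᵥ h) (star (R *ᵥ h)) := by
      rw [hw_smul, star_smul, smul_vecMulVec, vecMulVec_smul, smul_smul, star_trivial, ← sq,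
        inv_pow, Real.sq_sqrt hr]
    rw [hrank]
    exact hR.sub_smul_vecMulVec_mulVec h

/-- Extraction lemma (eq. (40)): for `R ⪰ 0` with `hᴴ·R·h ≠ 0`, the beamformer
`w = (hᴴ·R·h)^{-1/2}·R·h` satisfies `|hᴴ·w|² = hᴴ·R·h` and `R − w·wᴴ ⪰ 0`. -/
theorem beamformer_extraction
    {n : ℕ} (R : Matrix (Fin n) (Fin n) ℂ) (hR : R.PosSemidef)
    (h : Fin n → ℂ) (hne : star h ⬝ᵥ R.mulVec h ≠ 0)
    (w : Fin n → ℂ)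
    (hw : w = fun i => (star h ⬝ᵥ R.mulVec h) ^ (-(1 / 2) : ℂ) * R.mulVec h i) :
    ((‖star h ⬝ᵥ w‖ : ℂ)) ^ 2 = star h ⬝ᵥ R.mulVec h ∧
      (R - Matrix.vecMulVec w (star w)).PosSemidef :=
  beamformer_extraction_general R hR h w hw
end
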